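/- Let n ≥ 4 and let M : Fin n → Fin n → ℝ be a symmetric matrix with zero diagonal satisfying the PIC0 condition, i.e. M i k + M j k > 0 for all pairwise distinct indices i, j, k. Then for every nonzero h : Fin n → ℝ one has ∑_{i<j} M i j · (∑_{k ≠ i, k ≠ j} (h k)²) > 0. -/

import Mathlib

/-!
Exchanging the order of summation turns the sum into `∑ k, h k ^ 2 * S k`, where `S k` is the
sum of `M i j` over the pairs `i < j` avoiding `k`. Each `S k` is positive: by symmetry `2 S k`
is the sum over `i ≠ k` of the row sums `∑_{j ≠ i, k} M i j`, and each of these (over at least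
two indices `j`, as `n ≥ 4`) is positive by averaging the PIC0 inequalities
`M j i + M j' i > 0` over the pairs `j ≠ j'`. Since `h ≠ 0`, some `h k ^ 2 * S k` is positive.
-/

open Finset

namespace Finset

variable {ι M : Type*}

theorem sum_offDiag_eq_sum_sum_erase [DecidableEq ι] [AddCommMonoid M] (s : Finset ι)
    (f : ι → ι → M) :
    ∑ p ∈ s.offDiag, f p.1 p.2 = ∑ i ∈ s, ∑ j ∈ s.erase i, f i j :=
  sum_finset_product _ _ _ fun p => by simp [and_comm, ne_comm]

theorem two_nsmul_sum_filter_lt_eq_sum_offDiag [LinearOrder ι] [AddCommMonoid M]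
    {f : ι → ι → M} (hf : ∀ i j, f i j = f j i) (s : Finset ι) :
    2 • ∑ p ∈ s ×ˢ s with p.1 < p.2, f p.1 p.2 = ∑ p ∈ s.offDiag, f p.1 p.2 := by
  have hswap : ∑ p ∈ s.offDiag with ¬p.1 < p.2, f p.1 p.2
      = ∑ p ∈ s ×ˢ s with p.1 < p.2, f p.1 p.2 :=
    sum_equiv (Equiv.prodComm ι ι) (fun p => by grind) fun p _ => hf _ _
  have hlt : s.offDiag.filter (fun p => p.1 < p.2) = (s ×ˢ s).filter (fun p => p.1 < p.2) := by
    ext p; grind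
  rw [two_nsmul, ← sum_filter_add_sum_filter_not s.offDiag (fun p => p.1 < p.2), hswap, hlt]

/-- Averaging over pairs: `∑_{i ≠ j} (a i + a j) = 2 (#T - 1) ∑ a`. -/
theorem sum_pos_of_pairwise_add_pos [DecidableEq ι] {T : Finset ι} {a : ι → ℝ} (hT : 2 ≤ #T)
    (ha : ∀ i ∈ T, ∀ j ∈ T, i ≠ j → 0 < a i + a j) : 0 < ∑ i ∈ T, a i := by
  have hpairs : ∑ i ∈ T, ∑ j ∈ T.erase i, (a i + a j) = 2 * (#T - 1 : ℝ) * ∑ i ∈ T, a i := by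
    have hrow : ∀ i ∈ T, ∑ j ∈ T.erase i, (a i + a j)
        = (#T - 1 : ℝ) * a i + (∑ j ∈ T, a j - a i) := by
      intro i hi
      rw [sum_add_distrib, sum_const, card_erase_of_mem hi, sum_erase_eq_sub hi, nsmul_eq_mul,
        Nat.cast_pred (by omega)]
    rw [sum_congr rfl hrow, sum_add_distrib, ← mul_sum, sum_sub_distrib, sum_const,
      nsmul_eq_mul]
    ring
  have hpos : 0 < ∑ i ∈ T, ∑ j ∈ T.erase i, (a i + a j) := by
    refine sum_pos (fun i hi => sum_pos (fun j hj => ?_) ?_) (card_pos.mp (by omega))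
    · exact ha i hi j (mem_of_mem_erase hj) (ne_of_mem_erase hj).symm
    · exact card_pos.mp (by rw [card_erase_of_mem hi]; omega)
  have hT' : (1 : ℝ) < #T := by exact_mod_cast hT
  rw [hpairs] at hpos
  exact pos_of_mul_pos_right hpos (by linarith)

end Finset

def IsPIC0 {ι : Type*} (M : ι → ι → ℝ) : Prop :=
  ∀ i j k, i ≠ j → i ≠ k → j ≠ k → 0 < M i k + M j k

theorem IsPIC0.sum_filter_lt_pos {ι : Type*} [LinearOrder ι] {M : ι → ι → ℝ} (hM : IsPIC0 M)
    (hsymm : ∀ i j, M i j = M j i) {U : Finset ι} (hU : 3 ≤ #U) :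
    0 < ∑ p ∈ U ×ˢ U with p.1 < p.2, M p.1 p.2 := by
  have hrow : ∀ i ∈ U, 0 < ∑ j ∈ U.erase i, M i j := by
    intro i hi
    refine sum_pos_of_pairwise_add_pos (by rw [card_erase_of_mem hi]; omega)
      fun j hj j' hj' hjj' => ?_
    rw [hsymm i j, hsymm i j']
    exact hM j j' i hjj' (ne_of_mem_erase hj) (ne_of_mem_erase hj')
  have htwice : 0 < 2 • ∑ p ∈ U ×ˢ U with p.1 < p.2, M p.1 p.2 := by
    rw [two_nsmul_sum_filter_lt_eq_sum_offDiag hsymm, sum_offDiag_eq_sum_sum_erase]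
    exact sum_pos hrow (card_pos.mp (by omega))
  simpa using htwice

theorem sum_filter_lt_mul_sum_compl_eq {ι R : Type*} [Fintype ι] [LinearOrder ι]
    [CommSemiring R]
    (g : ι → ι → R) (f : ι → R) :
    ∑ p ∈ univ.filter (fun p : ι × ι => p.1 < p.2),
        g p.1 p.2 * ∑ k ∈ univ.filter (fun k => k ≠ p.1 ∧ k ≠ p.2), f k
      = ∑ k, f k * ∑ p ∈ univ.erase k ×ˢ univ.erase k with p.1 < p.2, g p.1 p.2 := by
  simp_rw [mul_sum, mul_comm (f _)]
  exact sum_comm' fun p k => by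
    simp only [mem_filter, mem_univ, true_and, mem_product, mem_erase, and_true]
    grind

theorem pic0_second_sum_pos_general (n : ℕ) (hn : 4 ≤ n) (M : Fin n → Fin n → ℝ)
    (hsymm : ∀ i j, M i j = M j i)
    (hPIC0 : ∀ i j k : Fin n, i ≠ j → i ≠ k → j ≠ k → 0 < M i k + M j k)
    (h : Fin n → ℝ) (hne : h ≠ 0) :
    0 < ∑ p ∈ Finset.univ.filter (fun p : Fin n × Fin n => p.1 < p.2),
        M p.1 p.2 *
          (∑ k ∈ Finset.univ.filter (fun k : Fin n => k ≠ p.1 ∧ k ≠ p.2), (h k) ^ 2) := by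
  have hS : ∀ k : Fin n, 0 < ∑ p ∈ univ.erase k ×ˢ univ.erase k with p.1 < p.2, M p.1 p.2 :=
    fun k => IsPIC0.sum_filter_lt_pos hPIC0 hsymm
      (by rw [card_erase_of_mem (mem_univ k), card_fin]; omega)
  obtain ⟨k₀, hk₀⟩ := Function.ne_iff.mp hne
  rw [sum_filter_lt_mul_sum_compl_eq]
  exact sum_pos' (fun k _ => mul_nonneg (sq_nonneg _) (hS k).le)
    ⟨k₀, mem_univ _, mul_pos (pow_two_pos_of_ne_zero hk₀) (hS k₀)⟩

/-- For `n ≥ 4` and a symmetric matrix `M : Fin n → Fin n → ℝ` with zero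
diagonal satisfying the PIC0 condition, for every nonzero `h : Fin n → ℝ` one has
`∑_{i<j} M i j * (∑_{k ≠ i, k ≠ j} (h k)^2) > 0`. -/
theorem pic0_second_sum_pos (n : ℕ) (hn : 4 ≤ n) (M : Fin n → Fin n → ℝ)
    (hsymm : ∀ i j, M i j = M j i) (hdiag : ∀ i, M i i = 0)
    (hPIC0 : ∀ i j k : Fin n, i ≠ j → i ≠ k → j ≠ k → 0 < M i k + M j k)
    (h : Fin n → ℝ) (hne : h ≠ 0) :
    0 < ∑ p ∈ Finset.univ.filter (fun p : Fin n × Fin n => p.1 < p.2),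
        M p.1 p.2 *
          (∑ k ∈ Finset.univ.filter (fun k : Fin n => k ≠ p.1 ∧ k ≠ p.2), (h k) ^ 2) :=
  pic0_second_sum_pos_general n hn M hsymm hPIC0 h hne
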